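/- Same interference property of capacity achieving ULDCs (Lemma 3, Property 2(a)): let N ≥ 2, K ≥ 2, and consider a universal locally decodable code (ULDC) with locality N, K source symbols of entropy L_w > 0, M coded symbols of entropy L_x, and symbol rate L_w/L_x = C*(N,K). Then for every k ∈ {1,…,K}, every decoding set S ∈ 𝒮_k, every pair of distinct indices i₁, i₂ ∈ S, and every k' ≠ k, the coded symbols X_{i₁} and X_{i₂} contain the same information about W_{k'}: H(X_{i₁} | X_{i₂}, W_{k'̄}) = H(X_{i₂} | X_{i₁}, W_{k'̄}) = 0, where W_{k'̄} is the tuple of all source symbols other than W_{k'}. -/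

import Mathlib

open scoped BigOperators

noncomputable section

/-- A finite probability space: a finite type together with a probability mass function. -/
structure FinProbSpace where
  Ω : Type
  [fin : Fintype Ω]
  p : Ω → ℝ
  nonneg : ∀ ω, 0 ≤ p ω
  sum_one : ∑ ω, p ω = 1

attribute [instance] FinProbSpace.fin

namespace FinProbSpace

variable (P : FinProbSpace)

/-- Probability that the random variable `X` takes the value `a`. -/
def prob {α : Type} [DecidableEq α] (X : P.Ω → α) (a : α) : ℝ :=
  ∑ ω, if X ω = a then P.p ω else 0

/-- Shannon entropy (in bits) of a finitely valued random variable. -/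
def H {α : Type} [Fintype α] [DecidableEq α] (X : P.Ω → α) : ℝ :=
  ∑ a, -(P.prob X a * Real.logb 2 (P.prob X a))

/-- Conditional Shannon entropy `H(X | Y) = H(X, Y) - H(Y)` (in bits). -/
def condH {α β : Type} [Fintype α] [DecidableEq α] [Fintype β] [DecidableEq β]
    (X : P.Ω → α) (Y : P.Ω → β) : ℝ :=
  P.H (fun ω => (X ω, Y ω)) - P.H Y

/-- The tuple random variable `(X_i)_{i ∈ ι}`. -/
def tuple {ι V : Type} (X : ι → P.Ω → V) : P.Ω → ι → V := fun ω i => X i ω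

/-- Joint (mutual) independence of a finite family of random variables. -/
def iIndep {ι V : Type} [Fintype ι] [DecidableEq ι] [DecidableEq V] (X : ι → P.Ω → V) : Prop :=
  ∀ a : ι → V, P.prob (P.tuple X) a = ∏ i, P.prob (X i) (a i)

/-- `X` and `Y` contain the same information about everything beyond `Z`:
`H(X | Y, Z) = H(Y | X, Z) = 0`. -/
def sameInfo {α β γ : Type} [Fintype α] [DecidableEq α] [Fintype β] [DecidableEq β]
    [Fintype γ] [DecidableEq γ] (X : P.Ω → α) (Y : P.Ω → β) (Z : P.Ω → γ) : Prop :=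
  P.condH X (fun ω => (Y ω, Z ω)) = 0 ∧ P.condH Y (fun ω => (X ω, Z ω)) = 0

end FinProbSpace

/-- A locally decodable code with `K` source symbols of entropy `Lw`, `M` coded symbols of
entropy `Lx`, and locality `N`. -/
structure LDC (K N M : ℕ) (Lw Lx : ℝ) where
  P : FinProbSpace
  V : Type
  [fV : Fintype V]
  [dV : DecidableEq V]
  V' : Type
  [fV' : Fintype V']
  [dV' : DecidableEq V']
  /-- the source symbols -/
  W : Fin K → P.Ω → V
  /-- the coded symbols -/
  X : Fin M → P.Ω → V'
  indep : P.iIndep W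
  HW : ∀ k, P.H (W k) = Lw
  coded_fn : ∀ m, ∃ f : (Fin K → V) → V', ∀ ω, X m ω = f (fun k => W k ω)
  HX : ∀ m, P.H (X m) = Lx
  /-- the decoding supersets -/
  decSets : Fin K → Finset (Finset (Fin M))
  decSets_nonempty : ∀ k, (decSets k).Nonempty
  decSets_card : ∀ k, ∀ s ∈ decSets k, s.card = N
  decodes : ∀ k, ∀ s ∈ decSets k,
    P.condH (W k) (P.tuple fun i : {x // x ∈ s} => X i.1) = 0

attribute [instance] LDC.fV LDC.dV LDC.fV' LDC.dV'

/-- A universal LDC: every coded symbol appears in some decoding set of every source symbol. -/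
def LDC.IsUniversal {K N M : ℕ} {Lw Lx : ℝ} (C : LDC K N M Lw Lx) : Prop :=
  ∀ (m : Fin M) (k : Fin K), ∃ s ∈ C.decSets k, m ∈ s

/-- A perfectly smooth LDC: for each source symbol, every coded symbol lies in the same
number of decoding sets. -/
def LDC.IsSmooth {K N M : ℕ} {Lw Lx : ℝ} (C : LDC K N M Lw Lx) : Prop :=
  ∀ (k : Fin K) (m m' : Fin M),
    ((C.decSets k).filter (fun s => m ∈ s)).card =
      ((C.decSets k).filter (fun s => m' ∈ s)).card

/-- `C*(N, K) = N (1 + 1/N + ⋯ + 1/N^{K-1})⁻¹`. -/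
def Cstar (N K : ℕ) : ℝ := N / (∑ j ∈ Finset.range K, (1 / (N : ℝ)) ^ j)

/-- An `N`-query information retrieval scheme with `K` messages of entropy `Lw` and
answer sets of sizes `Mn n` with answers of entropy `Lx`. -/
structure IRScheme (K N : ℕ) (Mn : Fin N → ℕ) (Lw Lx : ℝ) where
  P : FinProbSpace
  V : Type
  [fV : Fintype V]
  [dV : DecidableEq V]
  V' : Type
  [fV' : Fintype V']
  [dV' : DecidableEq V']
  /-- the messages -/
  W : Fin K → P.Ω → V
  /-- `A n m` is the `m`-th possible answer of database `n` -/
  A : (n : Fin N) → Fin (Mn n) → P.Ω → V'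
  indep : P.iIndep W
  HW : ∀ k, P.H (W k) = Lw
  ans_fn : ∀ n m, ∃ f : (Fin K → V) → V', ∀ ω, A n m ω = f (fun k => W k ω)
  HA : ∀ n m, P.H (A n m) = Lx
  /-- the decoding supersets: each decoding set consists of one answer index per database -/
  Q : Fin K → Finset ((n : Fin N) → Fin (Mn n))
  Q_nonempty : ∀ k, (Q k).Nonempty
  decodes : ∀ k, ∀ q ∈ Q k, P.condH (W k) (P.tuple fun n => A n (q n)) = 0

attribute [instance] IRScheme.fV IRScheme.dV IRScheme.fV' IRScheme.dV'

/-- A repudiative (RIR_max) scheme: every possible answer of every database appears in some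
decoding set of every message. -/
def IRScheme.IsRIR {K N : ℕ} {Mn : Fin N → ℕ} {Lw Lx : ℝ} (C : IRScheme K N Mn Lw Lx) : Prop :=
  ∀ (n : Fin N) (m : Fin (Mn n)) (k : Fin K), ∃ q ∈ C.Q k, q n = m

/-- A perfectly private (PIR_max) scheme: for each message there is a distribution on its
decoding sets such that the marginal distribution of the query to each database does not
depend on the message. -/
def IRScheme.IsPIR {K N : ℕ} {Mn : Fin N → ℕ} {Lw Lx : ℝ} (C : IRScheme K N Mn Lw Lx) : Prop :=
  ∃ μ : Fin K → ((n : Fin N) → Fin (Mn n)) → ℝ,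
    (∀ k q, 0 ≤ μ k q) ∧ (∀ k, ∑ q ∈ C.Q k, μ k q = 1) ∧
    (∀ (k k' : Fin K) (n : Fin N) (m : Fin (Mn n)),
      ∑ q ∈ (C.Q k).filter (fun q => q n = m), μ k q =
        ∑ q ∈ (C.Q k').filter (fun q => q n = m), μ k' q)

/-- `C_K(N) = (1 + 1/N + ⋯ + 1/N^{K-1})⁻¹`, the capacity of PIR. -/
def CK (N K : ℕ) : ℝ := (∑ j ∈ Finset.range K, (1 / (N : ℝ)) ^ j)⁻¹

/-!
Entropies are written as expectations over the sample space, `H(X) = -E[log₂ p_X(X)]`, so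
relabelling, monotonicity, the chain rule and the additivity of independent entropies become
pointwise facts about the logarithm, and submodularity `H(X | Y, Z) ≤ H(X | Z)` follows from
`log t ≤ t - 1` (Gibbs).

If `S` decodes `W_k` and `k ∉ J`, revealing `W_k` lowers `H(X_S | W_J)` by exactly `L_w`. With
universality and subadditivity over `S` this gives `H(X_m | W_J) ≤ b_{K - |J|}`, where `b_0 = 0`,
`b_{n+1} = (b_n + L_w) / N`, and at capacity `b_K = L_x`. Given every source symbol but `W_{k'}`,
each coded symbol therefore has entropy at most `b_1 = L_w / N`, and also at least `L_w / N`,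
because a decoding set of `W_{k'}` through it must carry `L_w`. A decoding set of `W_k`, `k ≠ k'`,
has joint conditional entropy at most `N b_2 - L_w = L_w / N`, so any two of its symbols carry
together no more than each of them alone.
-/

lemma Fintype.sum_ite_forall_mem_prod {ι V : Type} [Fintype ι] [DecidableEq ι] [Fintype V]
    [DecidableEq V] (q : ι → V → ℝ) (hq : ∀ i, ∑ x, q i x = 1) (J : Finset ι) (a : ι → V) :
    ∑ h : ι → V, (if ∀ j ∈ J, h j = a j then ∏ i, q i (h i) else 0) = ∏ j ∈ J, q j (a j) := by
  calc ∑ h : ι → V, (if ∀ j ∈ J, h j = a j then ∏ i, q i (h i) else 0)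
      = ∏ i, ∑ x, if i ∈ J → x = a i then q i x else 0 := by
        rw [Fintype.prod_sum]
        exact Finset.sum_congr rfl fun h _ => Fintype.prod_ite_zero.symm
    _ = ∏ i, if i ∈ J then q i (a i) else 1 := by
        refine Finset.prod_congr rfl fun i _ => ?_
        by_cases hi : i ∈ J <;> simp [hi, hq]
    _ = ∏ j ∈ J, q j (a j) := Fintype.prod_ite_mem J _

namespace FinProbSpace

def Determines {Ω α β : Type} (X : Ω → α) (Y : Ω → β) : Prop :=
  ∀ ω ω', X ω = X ω' → Y ω = Y ω'

lemma Determines.prodMk {Ω α β γ δ : Type} {X : Ω → α} {X' : Ω → β} {Y : Ω → γ}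
    {Y' : Ω → δ} (hX : Determines X X') (hY : Determines Y Y') :
    Determines (fun ω => (X ω, Y ω)) (fun ω => (X' ω, Y' ω)) := fun ω ω' h =>
  Prod.ext (hX ω ω' (congrArg Prod.fst h)) (hY ω ω' (congrArg Prod.snd h))

variable {P : FinProbSpace} {α β γ : Type} [DecidableEq α] [DecidableEq β] [DecidableEq γ]

lemma determines_tuple_apply {ι V : Type} (Y : ι → P.Ω → V) {s : Finset ι} {i : ι} (hi : i ∈ s) :
    Determines (P.tuple fun j : s => Y j.1) (Y i) := fun _ _ h => congrFun h ⟨i, hi⟩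

lemma determines_tuple_insert {ι V : Type} [DecidableEq ι] (Y : ι → P.Ω → V) (a : ι)
    (s : Finset ι) :
    Determines (P.tuple fun j : ↥(insert a s) => Y j.1)
      (fun ω => (Y a ω, P.tuple (fun j : s => Y j.1) ω)) := fun _ _ h =>
  Prod.ext (congrFun h ⟨a, Finset.mem_insert_self a s⟩)
    (funext fun j => congrFun h ⟨j, Finset.mem_insert_of_mem j.2⟩)

lemma determines_pair_tuple_insert {ι V : Type} [DecidableEq ι] (Y : ι → P.Ω → V) (a : ι)
    (s : Finset ι) :
    Determines (fun ω => (Y a ω, P.tuple (fun j : s => Y j.1) ω))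
      (P.tuple fun j : ↥(insert a s) => Y j.1) := fun _ _ h => funext fun ⟨j, hj⟩ => by
  rcases Finset.mem_insert.1 hj with rfl | hj
  · exact congrArg Prod.fst h
  · exact congrFun (congrArg Prod.snd h) ⟨j, hj⟩

lemma prob_nonneg (X : P.Ω → α) (a : α) : 0 ≤ P.prob X a :=
  Finset.sum_nonneg fun ω _ => by split_ifs <;> simp [P.nonneg]

lemma p_le_prob (X : P.Ω → α) (ω : P.Ω) : P.p ω ≤ P.prob X (X ω) := by
  unfold prob
  simpa using Finset.single_le_sum (f := fun ω' => if X ω' = X ω then P.p ω' else 0)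
    (fun ω' _ => by split_ifs <;> simp [P.nonneg]) (Finset.mem_univ ω)

lemma prob_self_pos (X : P.Ω → α) {ω : P.Ω} (hω : 0 < P.p ω) : 0 < P.prob X (X ω) :=
  hω.trans_le (p_le_prob X ω)

lemma sum_p_mul_comp [Fintype α] (X : P.Ω → α) (g : α → ℝ) :
    ∑ ω, P.p ω * g (X ω) = ∑ a, P.prob X a * g a := by
  simp only [prob, Finset.sum_mul, ite_mul, zero_mul]
  rw [Finset.sum_comm]
  simp

lemma sum_prob [Fintype α] (X : P.Ω → α) : ∑ a, P.prob X a = 1 := by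
  simpa [P.sum_one] using (sum_p_mul_comp X (fun _ => 1)).symm

lemma sum_prob_pair_left [Fintype α] (X : P.Ω → α) (Y : P.Ω → β) (b : β) :
    ∑ a, P.prob (fun ω => (X ω, Y ω)) (a, b) = P.prob Y b := by
  simp only [prob, Prod.mk.injEq]
  rw [Finset.sum_comm]
  refine Finset.sum_congr rfl fun ω _ => ?_
  by_cases h : Y ω = b <;> simp [h]

lemma sum_p_mul_le_of_pos {F G : P.Ω → ℝ} (h : ∀ ω, 0 < P.p ω → F ω ≤ G ω) :
    ∑ ω, P.p ω * F ω ≤ ∑ ω, P.p ω * G ω := by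
  refine Finset.sum_le_sum fun ω _ => ?_
  rcases (P.nonneg ω).eq_or_lt with h0 | h0
  · simp [← h0]
  · exact mul_le_mul_of_nonneg_left (h ω h0) h0.le

lemma prob_le_prob_of_determines {X : P.Ω → α} {Y : P.Ω → β} (h : Determines X Y)
    (ω : P.Ω) : P.prob X (X ω) ≤ P.prob Y (Y ω) :=
  Finset.sum_le_sum fun ω' _ => by
    by_cases hX : X ω' = X ω
    · simp [hX, h ω' ω hX]
    · simp only [hX, if_false]; split_ifs <;> simp [P.nonneg]

variable [Fintype α] [Fintype β] [Fintype γ]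

lemma sum_p_mul_congr_of_pos {F G : P.Ω → ℝ} (h : ∀ ω, 0 < P.p ω → F ω = G ω) :
    ∑ ω, P.p ω * F ω = ∑ ω, P.p ω * G ω :=
  le_antisymm (sum_p_mul_le_of_pos fun ω hω => (h ω hω).le)
    (sum_p_mul_le_of_pos fun ω hω => (h ω hω).ge)

lemma H_eq_sum (X : P.Ω → α) :
    P.H X = -∑ ω, P.p ω * Real.logb 2 (P.prob X (X ω)) := by
  rw [sum_p_mul_comp X fun a => Real.logb 2 (P.prob X a), H, ← Finset.sum_neg_distrib]

lemma H_le_of_determines {X : P.Ω → α} {Y : P.Ω → β} (h : Determines X Y) :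
    P.H Y ≤ P.H X := by
  rw [H_eq_sum, H_eq_sum, neg_le_neg_iff]
  exact sum_p_mul_le_of_pos fun ω hω => Real.logb_le_logb_of_le one_lt_two
    (prob_self_pos X hω) (prob_le_prob_of_determines h ω)

lemma H_congr {X : P.Ω → α} {Y : P.Ω → β} (hXY : Determines X Y) (hYX : Determines Y X) :
    P.H X = P.H Y :=
  le_antisymm (H_le_of_determines hYX) (H_le_of_determines hXY)

lemma H_eq_zero_of_subsingleton [Subsingleton α] (X : P.Ω → α) : P.H X = 0 := by
  have hprob : ∀ ω, P.prob X (X ω) = 1 := fun ω => by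
    simp [prob, Subsingleton.elim (X _) (X ω), P.sum_one]
  simp [H_eq_sum, hprob]

variable {δ : Type} [DecidableEq δ] [Fintype δ]

lemma H_pair_eq_add_of_prob_mul {X : P.Ω → α} {Y : P.Ω → β}
    (h : ∀ a b, P.prob (fun ω => (X ω, Y ω)) (a, b) = P.prob X a * P.prob Y b) :
    P.H (fun ω => (X ω, Y ω)) = P.H X + P.H Y := by
  simp only [H_eq_sum, h]
  rw [sum_p_mul_congr_of_pos fun ω hω =>
    Real.logb_mul (prob_self_pos X hω).ne' (prob_self_pos Y hω).ne']
  simp only [mul_add, Finset.sum_add_distrib]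
  ring

lemma condH_nonneg (X : P.Ω → α) (Y : P.Ω → β) : 0 ≤ P.condH X Y :=
  sub_nonneg.2 (H_le_of_determines fun _ _ h => congrArg Prod.snd h)

lemma condH_congr {X : P.Ω → α} {X' : P.Ω → β} {Y : P.Ω → γ} {Y' : P.Ω → δ}
    (hX : Determines X X') (hX' : Determines X' X) (hY : Determines Y Y')
    (hY' : Determines Y' Y) : P.condH X Y = P.condH X' Y' := by
  unfold condH
  rw [H_congr hY hY', H_congr (X := fun ω => (X ω, Y ω)) (Y := fun ω => (X' ω, Y' ω))
    (hX.prodMk hY) (hX'.prodMk hY')]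

lemma condH_eq_zero_of_determines {X : P.Ω → α} {Y : P.Ω → β} (h : Determines Y X) :
    P.condH X Y = 0 := by
  rw [condH, sub_eq_zero]
  exact H_congr (fun _ _ hXY => congrArg Prod.snd hXY)
    (fun ω ω' hY => Prod.ext (h ω ω' hY) hY)

lemma condH_eq_H_of_subsingleton [Subsingleton β] (X : P.Ω → α) (Y : P.Ω → β) :
    P.condH X Y = P.H X := by
  rw [condH, H_eq_zero_of_subsingleton Y, sub_zero]
  exact H_congr (fun _ _ h => congrArg Prod.fst h)
    (fun ω ω' h => Prod.ext h (Subsingleton.elim _ _))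

lemma condH_pair_eq_add (X : P.Ω → α) (Y : P.Ω → β) (Z : P.Ω → γ) :
    P.condH (fun ω => (X ω, Y ω)) Z = P.condH X (fun ω => (Y ω, Z ω)) + P.condH Y Z := by
  have hassoc : P.H (fun ω => ((X ω, Y ω), Z ω)) = P.H (fun ω => (X ω, (Y ω, Z ω))) :=
    H_congr (fun ω ω' h => by simp_all [Prod.ext_iff]) (fun ω ω' h => by simp_all [Prod.ext_iff])
  simp only [condH]
  linarith

lemma condH_mono_left {X : P.Ω → α} {X' : P.Ω → β} (h : Determines X X') (Z : P.Ω → γ) :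
    P.condH X' Z ≤ P.condH X Z :=
  sub_le_sub_right (H_le_of_determines (h.prodMk fun _ _ => id)) _

lemma sum_p_mul_logb_nonpos {f : P.Ω → ℝ} (hf : ∀ ω, 0 < P.p ω → 0 < f ω)
    (hsum : ∑ ω, P.p ω * f ω ≤ 1) : ∑ ω, P.p ω * Real.logb 2 (f ω) ≤ 0 := by
  have hlog2 : 0 < Real.log 2 := Real.log_pos one_lt_two
  calc ∑ ω, P.p ω * Real.logb 2 (f ω) ≤ ∑ ω, P.p ω * ((f ω - 1) / Real.log 2) :=
        sum_p_mul_le_of_pos fun ω hω =>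
          div_le_div_of_nonneg_right (Real.log_le_sub_one_of_pos (hf ω hω)) hlog2.le
    _ = (∑ ω, P.p ω * f ω - 1) / Real.log 2 := by
        simp only [mul_div_assoc', ← Finset.sum_div, mul_sub, mul_one, Finset.sum_sub_distrib,
          P.sum_one]
    _ ≤ 0 := div_nonpos_of_nonpos_of_nonneg (by linarith) hlog2.le

lemma sum_p_mul_ratio_le_one (X : P.Ω → α) (Y : P.Ω → β) (Z : P.Ω → γ) :
    ∑ ω, P.p ω * (P.prob (fun ω => (X ω, Z ω)) (X ω, Z ω) * P.prob (fun ω => (Y ω, Z ω)) (Y ω, Z ω)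
      / (P.prob (fun ω => (X ω, (Y ω, Z ω))) (X ω, (Y ω, Z ω)) * P.prob Z (Z ω))) ≤ 1 := by
  set r := P.prob (fun ω => (X ω, (Y ω, Z ω)))
  set s := P.prob (fun ω => (X ω, Z ω))
  set t := P.prob (fun ω => (Y ω, Z ω))
  set q := P.prob Z
  calc _ = ∑ v : α × β × γ, r v * (s (v.1, v.2.2) * t v.2 / (r v * q v.2.2)) :=
        sum_p_mul_comp (fun ω => (X ω, (Y ω, Z ω)))
          fun v => s (v.1, v.2.2) * t v.2 / (r v * q v.2.2)
    _ ≤ ∑ v : α × β × γ, s (v.1, v.2.2) * t v.2 / q v.2.2 := by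
        refine Finset.sum_le_sum fun v _ => ?_
        rcases (show 0 ≤ r v from prob_nonneg _ v).eq_or_lt with hr | hr
        · rw [← hr, zero_mul]
          exact div_nonneg (mul_nonneg (prob_nonneg _ _) (prob_nonneg _ _)) (prob_nonneg _ _)
        · exact le_of_eq (by field_simp)
    _ = ∑ c, (∑ a, s (a, c)) * (∑ b, t (b, c)) / q c := by
        simp only [Fintype.sum_prod_type, Finset.sum_mul, Finset.mul_sum, Finset.sum_div]
        rw [Finset.sum_comm]
        trans ∑ b, ∑ c, ∑ a, s (a, c) * t (b, c) / q c
        · exact Finset.sum_congr rfl fun b _ => Finset.sum_comm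
        · exact Finset.sum_comm
    _ = ∑ c, q c * q c / q c := by
        simp only [s, t, q, sum_prob_pair_left]
    _ = 1 := by simp only [mul_self_div_self]; exact sum_prob Z

lemma condH_pair_le (X : P.Ω → α) (Y : P.Ω → β) (Z : P.Ω → γ) :
    P.condH X (fun ω => (Y ω, Z ω)) ≤ P.condH X Z := by
  have hlog : ∑ ω, P.p ω * Real.logb 2
      (P.prob (fun ω => (X ω, Z ω)) (X ω, Z ω) * P.prob (fun ω => (Y ω, Z ω)) (Y ω, Z ω)
        / (P.prob (fun ω => (X ω, (Y ω, Z ω))) (X ω, (Y ω, Z ω)) * P.prob Z (Z ω)))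
      = P.H (fun ω => (X ω, (Y ω, Z ω))) + P.H Z
        - P.H (fun ω => (X ω, Z ω)) - P.H (fun ω => (Y ω, Z ω)) := by
    rw [sum_p_mul_congr_of_pos fun ω hω => by
      rw [Real.logb_div (mul_pos (prob_self_pos _ hω) (prob_self_pos _ hω)).ne'
          (mul_pos (prob_self_pos _ hω) (prob_self_pos _ hω)).ne',
        Real.logb_mul (prob_self_pos _ hω).ne' (prob_self_pos _ hω).ne',
        Real.logb_mul (prob_self_pos _ hω).ne' (prob_self_pos _ hω).ne']]
    simp only [H_eq_sum, mul_sub, mul_add, Finset.sum_sub_distrib, Finset.sum_add_distrib]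
    ring
  have := sum_p_mul_logb_nonpos (fun ω hω => div_pos
    (mul_pos (prob_self_pos _ hω) (prob_self_pos _ hω))
    (mul_pos (prob_self_pos _ hω) (prob_self_pos _ hω))) (sum_p_mul_ratio_le_one X Y Z)
  simp only [condH]
  linarith

lemma condH_anti_right (X : P.Ω → α) {Y : P.Ω → β} {Y' : P.Ω → γ} (h : Determines Y' Y) :
    P.condH X Y' ≤ P.condH X Y := by
  calc P.condH X Y' = P.condH X (fun ω => (Y' ω, Y ω)) :=
        condH_congr (fun _ _ => id) (fun _ _ => id) (fun ω ω' hY => Prod.ext hY (h ω ω' hY))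
          (fun _ _ hY => congrArg Prod.fst hY)
    _ ≤ P.condH X Y := condH_pair_le X Y' Y

lemma condH_pair_le_add (X : P.Ω → α) (Y : P.Ω → β) (Z : P.Ω → γ) :
    P.condH (fun ω => (X ω, Y ω)) Z ≤ P.condH X Z + P.condH Y Z := by
  rw [condH_pair_eq_add]
  linarith [condH_pair_le X Y Z]

lemma condH_pair_comm (X : P.Ω → α) (Y : P.Ω → β) (Z : P.Ω → γ) :
    P.condH (fun ω => (X ω, Y ω)) Z = P.condH (fun ω => (Y ω, X ω)) Z :=
  condH_congr (fun _ _ h => Prod.ext (congrArg Prod.snd h) (congrArg Prod.fst h))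
    (fun _ _ h => Prod.ext (congrArg Prod.snd h) (congrArg Prod.fst h))
    (fun _ _ => id) (fun _ _ => id)

lemma sameInfo_of_condH_pair_le {X : P.Ω → α} {Y : P.Ω → β} {Z : P.Ω → γ}
    (hX : P.condH (fun ω => (X ω, Y ω)) Z ≤ P.condH X Z)
    (hY : P.condH (fun ω => (X ω, Y ω)) Z ≤ P.condH Y Z) : P.sameInfo X Y Z := by
  have hXY := condH_pair_eq_add X Y Z
  have hYX := condH_pair_eq_add Y X Z
  rw [← condH_pair_comm] at hYX
  exact ⟨le_antisymm (by linarith) (condH_nonneg _ _),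
    le_antisymm (by linarith) (condH_nonneg _ _)⟩

variable {ι V : Type} [Fintype ι] [DecidableEq ι] [Fintype V]
  [DecidableEq V] {W : ι → P.Ω → V}

lemma iIndep.sum_ite_forall_mem (hW : P.iIndep W) (J : Finset ι) (a : ι → V) :
    ∑ ω, (if ∀ j ∈ J, W j ω = a j then P.p ω else 0) = ∏ j ∈ J, P.prob (W j) (a j) := by
  let g : (ι → V) → ℝ := fun h => if ∀ j ∈ J, h j = a j then 1 else 0
  calc ∑ ω, (if ∀ j ∈ J, W j ω = a j then P.p ω else 0)
      = ∑ ω, P.p ω * g (P.tuple W ω) := Finset.sum_congr rfl fun ω _ => by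
        rw [mul_ite, mul_one, mul_zero]; exact if_congr Iff.rfl rfl rfl
    _ = ∑ h, P.prob (P.tuple W) h * g h := sum_p_mul_comp (P.tuple W) g
    _ = ∑ h : ι → V, (if ∀ j ∈ J, h j = a j then ∏ i, P.prob (W i) (h i) else 0) :=
        Finset.sum_congr rfl fun h _ => by simp [g, hW h]
    _ = ∏ j ∈ J, P.prob (W j) (a j) :=
        Fintype.sum_ite_forall_mem_prod _ (fun i => sum_prob (W i)) J a

lemma iIndep.condH_eq_H (hW : P.iIndep W) {k : ι} {J : Finset ι} (hk : k ∉ J) :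
    P.condH (W k) (P.tuple fun j : J => W j.1) = P.H (W k) := by
  set WJ := P.tuple fun j : J => W j.1
  suffices hmul : ∀ v a, P.prob (fun ω => (W k ω, WJ ω)) (v, a) = P.prob (W k) v * P.prob WJ a by
    rw [condH, H_pair_eq_add_of_prob_mul hmul, add_sub_cancel_right]
  intro v a
  let a' : ι → V := fun i => if hi : i ∈ J then a ⟨i, hi⟩ else v
  have hJ : ∀ ω, WJ ω = a ↔ ∀ j ∈ J, W j ω = a' j := fun ω => by
    simp +contextual [WJ, a', tuple, funext_iff]
  have hkJ : ∀ ω, (W k ω, WJ ω) = (v, a) ↔ ∀ j ∈ insert k J, W j ω = a' j := fun ω => by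
    rw [Prod.ext_iff, hJ, Finset.forall_mem_insert]
    simp [a', hk]
  calc P.prob (fun ω => (W k ω, WJ ω)) (v, a)
      = ∑ ω, (if ∀ j ∈ insert k J, W j ω = a' j then P.p ω else 0) :=
        Finset.sum_congr rfl fun ω _ => if_congr (hkJ ω) rfl rfl
    _ = P.prob (W k) v * ∏ j ∈ J, P.prob (W j) (a' j) := by
        rw [hW.sum_ite_forall_mem, Finset.prod_insert hk]
        simp [a', hk]
    _ = P.prob (W k) v * P.prob WJ a := by
        rw [← hW.sum_ite_forall_mem]
        exact congrArg _ (Finset.sum_congr rfl fun ω _ => (if_congr (hJ ω) rfl rfl).symm)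

end FinProbSpace

def uldcBound (Lw : ℝ) (N : ℕ) : ℕ → ℝ
  | 0 => 0
  | n + 1 => (uldcBound Lw N n + Lw) / N

lemma uldcBound_eq_sum (Lw : ℝ) (N n : ℕ) :
    uldcBound Lw N n = Lw * ∑ t ∈ Finset.range n, (1 / (N : ℝ)) ^ (t + 1) := by
  induction n with
  | zero => simp [uldcBound]
  | succ n ih =>
    rw [uldcBound, ih, Finset.sum_range_succ']
    simp only [pow_succ _ (_ + 1), ← Finset.sum_mul]
    ring

lemma uldcBound_one (Lw : ℝ) (N : ℕ) : uldcBound Lw N 1 = Lw / N := by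
  simp [uldcBound]

lemma mul_uldcBound_succ_sub {N : ℕ} (hN : 0 < N) (Lw : ℝ) (n : ℕ) :
    N * uldcBound Lw N (n + 1) - Lw = uldcBound Lw N n := by
  rw [uldcBound]
  field_simp
  ring

lemma eq_uldcBound_of_div_eq_Cstar {N K : ℕ} (hN : 0 < N) (hK : 0 < K) {Lw Lx : ℝ}
    (hcap : Lw / Lx = Cstar N K) : Lx = uldcBound Lw N K := by
  have hD : 0 < ∑ j ∈ Finset.range K, (1 / (N : ℝ)) ^ j :=
    Finset.sum_pos (fun _ _ => by positivity) ⟨0, Finset.mem_range.2 hK⟩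
  have hC : Cstar N K ≠ 0 := (div_pos (Nat.cast_pos.2 hN) hD).ne'
  have hLx : Lx ≠ 0 := by
    rintro rfl
    exact hC (by rw [← hcap, div_zero])
  rw [div_eq_iff hLx] at hcap
  rw [uldcBound_eq_sum, hcap, Cstar]
  simp only [pow_succ, ← Finset.sum_mul]
  field_simp

namespace LDC

open FinProbSpace

variable {K N M : ℕ} {Lw Lx : ℝ} (C : LDC K N M Lw Lx)

def sourcesOn (J : Finset (Fin K)) : C.P.Ω → J → C.V := C.P.tuple fun j : J => C.W j.1

def codedOn (s : Finset (Fin M)) : C.P.Ω → s → C.V' := C.P.tuple fun i : s => C.X i.1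

variable {C} {γ : Type} [Fintype γ] [DecidableEq γ]

lemma condH_W_sourcesOn {k : Fin K} {J : Finset (Fin K)} (hk : k ∉ J) :
    C.P.condH (C.W k) (C.sourcesOn J) = Lw :=
  (C.indep.condH_eq_H hk).trans (C.HW k)

lemma condH_codedOn_le_sum (s : Finset (Fin M)) (Z : C.P.Ω → γ) :
    C.P.condH (C.codedOn s) Z ≤ ∑ i ∈ s, C.P.condH (C.X i) Z := by
  induction s using Finset.induction_on with
  | empty =>
    rw [condH_eq_zero_of_determines fun _ _ _ => funext fun j => absurd j.2 (Finset.notMem_empty _),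
      Finset.sum_empty]
  | insert a s ha ih =>
    calc C.P.condH (C.codedOn (insert a s)) Z
        = C.P.condH (fun ω => (C.X a ω, C.codedOn s ω)) Z :=
          condH_congr (determines_tuple_insert C.X a s) (determines_pair_tuple_insert C.X a s)
            (fun _ _ => id) (fun _ _ => id)
      _ ≤ C.P.condH (C.X a) Z + C.P.condH (C.codedOn s) Z := condH_pair_le_add _ _ _
      _ ≤ ∑ i ∈ insert a s, C.P.condH (C.X i) Z := by rw [Finset.sum_insert ha]; linarith

lemma condH_W_pair_codedOn_eq_zero {k : Fin K} {S : Finset (Fin M)} (hS : S ∈ C.decSets k)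
    (Z : C.P.Ω → γ) : C.P.condH (C.W k) (fun ω => (C.codedOn S ω, Z ω)) = 0 :=
  le_antisymm ((condH_anti_right _ fun _ _ h => congrArg Prod.fst h).trans_eq
    (C.decodes k S hS)) (condH_nonneg _ _)

lemma condH_codedOn_sourcesOn_insert {k : Fin K} {J : Finset (Fin K)} {S : Finset (Fin M)}
    (hk : k ∉ J) (hS : S ∈ C.decSets k) :
    C.P.condH (C.codedOn S) (C.sourcesOn (insert k J))
      = C.P.condH (C.codedOn S) (C.sourcesOn J) - Lw := by
  have hchain := condH_pair_eq_add (C.codedOn S) (C.W k) (C.sourcesOn J)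
  have hchain' := condH_pair_eq_add (C.W k) (C.codedOn S) (C.sourcesOn J)
  rw [condH_pair_comm, condH_W_pair_codedOn_eq_zero hS] at hchain'
  rw [condH_W_sourcesOn hk] at hchain
  have hinsert : C.P.condH (C.codedOn S) (C.sourcesOn (insert k J))
      = C.P.condH (C.codedOn S) (fun ω => (C.W k ω, C.sourcesOn J ω)) :=
    condH_congr (fun _ _ => id) (fun _ _ => id)
      (determines_tuple_insert C.W k J) (determines_pair_tuple_insert C.W k J)
  linarith

lemma condH_codedOn_sourcesOn_insert_le {k : Fin K} {J : Finset (Fin K)} {S : Finset (Fin M)}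
    (hk : k ∉ J) (hS : S ∈ C.decSets k) {c : ℝ}
    (hc : ∀ i, C.P.condH (C.X i) (C.sourcesOn J) ≤ c) :
    C.P.condH (C.codedOn S) (C.sourcesOn (insert k J)) ≤ N * c - Lw := by
  have hsum := (condH_codedOn_le_sum S (C.sourcesOn J)).trans
    (Finset.sum_le_card_nsmul S _ c fun i _ => hc i)
  rw [C.decSets_card k S hS, nsmul_eq_mul] at hsum
  rw [condH_codedOn_sourcesOn_insert hk hS]
  linarith

lemma condH_X_sourcesOn_le (hU : C.IsUniversal) (hN : 0 < N) (hLx : Lx = uldcBound Lw N K)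
    (J : Finset (Fin K)) (m : Fin M) :
    C.P.condH (C.X m) (C.sourcesOn J) ≤ uldcBound Lw N (K - J.card) := by
  induction J using Finset.induction_on generalizing m with
  | empty =>
    have : Subsingleton (↥(∅ : Finset (Fin K)) → C.V) :=
      ⟨fun _ _ => funext fun j => absurd j.2 (Finset.notMem_empty _)⟩
    rw [condH_eq_H_of_subsingleton, C.HX m, hLx, Finset.card_empty, Nat.sub_zero]
  | insert k J hk ih =>
    obtain ⟨S, hS, hmS⟩ := hU m k
    have hJ : J.card < K := by
      simpa [Finset.card_insert_of_notMem hk] using (insert k J).card_le_univ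
    calc C.P.condH (C.X m) (C.sourcesOn (insert k J))
        ≤ C.P.condH (C.codedOn S) (C.sourcesOn (insert k J)) :=
          condH_mono_left (determines_tuple_apply C.X hmS) _
      _ ≤ N * uldcBound Lw N (K - J.card) - Lw := condH_codedOn_sourcesOn_insert_le hk hS ih
      _ = uldcBound Lw N (K - (insert k J).card) := by
          rw [Finset.card_insert_of_notMem hk, show K - J.card = K - (J.card + 1) + 1 by omega]
          exact mul_uldcBound_succ_sub hN Lw _

lemma condH_X_sourcesOn_compl_eq (hU : C.IsUniversal) (hN : 0 < N)
    (hLx : Lx = uldcBound Lw N K) (k' : Fin K) (m : Fin M) :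
    C.P.condH (C.X m) (C.sourcesOn {k'}ᶜ) = Lw / N := by
  have hupper : ∀ i, C.P.condH (C.X i) (C.sourcesOn {k'}ᶜ) ≤ Lw / N := fun i => by
    have := condH_X_sourcesOn_le hU hN hLx {k'}ᶜ i
    rwa [Finset.card_compl, Finset.card_singleton, Fintype.card_fin, Nat.sub_sub_self k'.pos,
      uldcBound_one] at this
  obtain ⟨S, hS, hmS⟩ := hU m k'
  have hlower : ∑ i ∈ S, Lw / N ≤ ∑ i ∈ S, C.P.condH (C.X i) (C.sourcesOn {k'}ᶜ) := by
    have h0 := condH_nonneg (C.codedOn S) (C.sourcesOn (insert k' {k'}ᶜ))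
    rw [condH_codedOn_sourcesOn_insert (by simp) hS] at h0
    have hsum : ∑ i ∈ S, Lw / N = Lw := by
      rw [Finset.sum_const, C.decSets_card k' S hS, nsmul_eq_mul]
      field_simp
    linarith [condH_codedOn_le_sum S (C.sourcesOn {k'}ᶜ)]
  exact (Finset.sum_eq_sum_iff_of_le fun i _ => hupper i).1
    (le_antisymm (Finset.sum_le_sum fun i _ => hupper i) hlower) m hmS

lemma condH_codedOn_sourcesOn_compl_le (hU : C.IsUniversal) (hN : 0 < N)
    (hLx : Lx = uldcBound Lw N K) {k k' : Fin K} (hk' : k' ≠ k) {S : Finset (Fin M)}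
    (hS : S ∈ C.decSets k) : C.P.condH (C.codedOn S) (C.sourcesOn {k'}ᶜ) ≤ Lw / N := by
  have hk : k ∈ ({k'}ᶜ : Finset (Fin K)) := by simpa using hk'.symm
  have hcard : K - (({k'}ᶜ : Finset (Fin K)).erase k).card = 1 + 1 := by
    have hpos := Finset.card_pos.2 ⟨k, hk⟩
    rw [Finset.card_erase_of_mem hk]
    rw [Finset.card_compl, Finset.card_singleton, Fintype.card_fin] at hpos ⊢
    omega
  have := condH_codedOn_sourcesOn_insert_le (Finset.notMem_erase k ({k'}ᶜ : Finset (Fin K))) hS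
    fun i => condH_X_sourcesOn_le hU hN hLx _ i
  rwa [Finset.insert_erase hk, hcard, mul_uldcBound_succ_sub hN, uldcBound_one] at this

end LDC

theorem uldc_same_interference_general (K N M : ℕ) (Lw Lx : ℝ)
    (C : LDC K N M Lw Lx) (hU : C.IsUniversal)
    (hcap : Lw / Lx = Cstar N K)
    (k : Fin K) (S : Finset (Fin M)) (hS : S ∈ C.decSets k)
    (i₁ i₂ : Fin M) (h₁ : i₁ ∈ S) (h₂ : i₂ ∈ S)
    (k' : Fin K) (hk' : k' ≠ k) :
    C.P.sameInfo (C.X i₁) (C.X i₂)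
      (C.P.tuple fun j : {x // x ∈ ({k'}ᶜ : Finset (Fin K))} => C.W j.1) := by
  have hN : 0 < N := C.decSets_card k S hS ▸ Finset.card_pos.2 ⟨i₁, h₁⟩
  have hLx := eq_uldcBound_of_div_eq_Cstar hN k.pos hcap
  have hX := C.condH_X_sourcesOn_compl_eq hU hN hLx k'
  have hpair : C.P.condH (fun ω => (C.X i₁ ω, C.X i₂ ω)) (C.sourcesOn {k'}ᶜ) ≤ Lw / N :=
    (FinProbSpace.condH_mono_left (fun _ _ h => Prod.ext (congrFun h ⟨i₁, h₁⟩)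
      (congrFun h ⟨i₂, h₂⟩)) _).trans (C.condH_codedOn_sourcesOn_compl_le hU hN hLx hk' hS)
  exact FinProbSpace.sameInfo_of_condH_pair_le (hpair.trans_eq (hX i₁).symm)
    (hpair.trans_eq (hX i₂).symm)

/-- Same interference property, Lemma 3, Property 2(a): in a capacity
achieving ULDC, for every decoding set `S ∈ 𝒮_k`, distinct `i₁, i₂ ∈ S` and `k' ≠ k`,
the coded symbols `X_{i₁}` and `X_{i₂}` contain the same information about `W_{k'}`. -/
theorem uldc_same_interference (K N M : ℕ) (hK : 2 ≤ K) (hN : 2 ≤ N) (Lw Lx : ℝ)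
    (hLw : 0 < Lw) (C : LDC K N M Lw Lx) (hU : C.IsUniversal)
    (hcap : Lw / Lx = Cstar N K)
    (k : Fin K) (S : Finset (Fin M)) (hS : S ∈ C.decSets k)
    (i₁ i₂ : Fin M) (h₁ : i₁ ∈ S) (h₂ : i₂ ∈ S) (hne : i₁ ≠ i₂)
    (k' : Fin K) (hk' : k' ≠ k) :
    C.P.sameInfo (C.X i₁) (C.X i₂)
      (C.P.tuple fun j : {x // x ∈ ({k'}ᶜ : Finset (Fin K))} => C.W j.1) :=
  uldc_same_interference_general K N M Lw Lx C hU hcap k S hS i₁ i₂ h₁ h₂ k' hk'
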